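/- Let λ be a partition with empty 2-core. Then b(λ) ≥ 0, and b(λ) = 0 if and only if every part of λ is even. -/

import Mathlib

/-- A partition `λ`, 1-indexed: `λ_i = part i` for `i ≥ 1`. -/
structure IdxPartition where
  part : ℕ → ℕ
  part_zero : part 0 = 0
  antitone : ∀ ⦃i j : ℕ⦄, 1 ≤ i → i ≤ j → part j ≤ part i
  finite : ∃ N : ℕ, ∀ i : ℕ, N ≤ i → part i = 0

/-- The conjugate partition: `λ'_j = #{i ≥ 1 : λ_i ≥ j}`. -/
noncomputable def conjFn (f : ℕ → ℕ) (j : ℕ) : ℕ :=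
  Set.ncard {i : ℕ | 1 ≤ i ∧ j ≤ f i}

/-- The cells of the Young diagram of `λ`. -/
def cellsFn (f : ℕ → ℕ) : Set (ℕ × ℕ) :=
  {p : ℕ × ℕ | 1 ≤ p.1 ∧ 1 ≤ p.2 ∧ p.2 ≤ f p.1}

/-- The hook length of the cell `(i,j)`: `h(i,j) = (λ_i − j) + (λ'_j − i) + 1`. -/
noncomputable def hookFn (f : ℕ → ℕ) (i j : ℕ) : ℕ :=
  (f i - j) + (conjFn f j - i) + 1

/-- `b(λ) = Σ_{(i,j)∈λ} (−1)^{λ_i + λ'_j − i − j + 1}(λ_i − i)`;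
the exponent is replaced by `λ_i + λ'_j + i + j + 1`, which has the same parity. -/
noncomputable def bFn (f : ℕ → ℕ) : ℤ :=
  ∑ᶠ i : ℕ, ∑ j ∈ Finset.Icc 1 (f i),
    (-1 : ℤ) ^ (f i + conjFn f j + i + j + 1) * ((f i : ℤ) - (i : ℤ))

/-- The size `|λ| = Σ_i λ_i`. -/
noncomputable def sizeFn (f : ℕ → ℕ) : ℕ := ∑ᶠ i : ℕ, f i

/-- A domino: a pair of horizontally or vertically adjacent cells. -/
def IsDomino (d : Set (ℕ × ℕ)) : Prop :=
  ∃ i j : ℕ, d = {(i, j), (i, j + 1)} ∨ d = {(i, j), (i + 1, j)}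

/-- The Young diagram of `λ` can be tiled by dominoes. -/
def HasDominoTiling (f : ℕ → ℕ) : Prop :=
  ∃ D : Set (Set (ℕ × ℕ)), (∀ d ∈ D, IsDomino d) ∧
    D.PairwiseDisjoint id ∧ ⋃₀ D = cellsFn f

/-!
Let `m = λ'_1`, let `β_k = λ_k + m - k` be the β-numbers and
`S_r = Σ_{r ≤ k ≤ m} (-1)^{β_k}`. The hook lengths in row `i` are `{1, …, β_i}` with
`{β_i - β_k : k > i}` removed, so twice the signed hook sum of row `i` is `q_{i+1} - q_i`, where
`q_r = S_r (S_r - 1) ≥ 0`. Summation by parts gives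
`2 b(λ) = Σ_i q_{i+1} (λ_i - λ_{i+1} + 1) - q_1 (λ_1 - 1)`. A domino tiling kills the
checkerboard sum `Σ (-1)^{i+j}` over the diagram, which forces `S_1 ∈ {0, 1}`, i.e. `q_1 = 0`.
Hence `b(λ) ≥ 0`, with equality iff every `S_r ∈ {0, 1}`; since `S_{m+1} = 0` and the signs are
`±1`, this says `(-1)^{β_k} = (-1)^{m-k}` for all `k`, i.e. all parts are even.
-/

open Finset

lemma neg_one_pow_eq_one_sub_two_mul_mod_two (n : ℕ) :
    (-1 : ℤ) ^ n = 1 - 2 * ((n % 2 : ℕ) : ℤ) := by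
  rcases Nat.even_or_odd n with h | h
  · rw [h.neg_one_pow, Nat.even_iff.1 h]; simp
  · rw [h.neg_one_pow, Nat.odd_iff.1 h]; norm_num

lemma neg_one_pow_sub_eq_mul {a b : ℕ} (h : b ≤ a) :
    (-1 : ℤ) ^ (a - b) = (-1) ^ a * (-1) ^ b := by
  rw [← pow_add, neg_one_pow_eq_one_sub_two_mul_mod_two, neg_one_pow_eq_one_sub_two_mul_mod_two]
  omega

lemma two_mul_sum_Icc_neg_one_pow (n : ℕ) :
    2 * ∑ j ∈ Icc 1 n, (-1 : ℤ) ^ j = (-1) ^ n - 1 := by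
  induction n with
  | zero => simp
  | succ n ih => rw [sum_Icc_succ_top (by omega), mul_add, ih, pow_succ]; ring

lemma sum_Icc_sub_mul_eq {R : Type*} [CommRing R] (q a : ℕ → R) (n : ℕ) :
    ∑ i ∈ Icc 1 n, (q (i + 1) - q i) * a i =
      ∑ i ∈ Icc 1 n, q (i + 1) * (a i - a (i + 1)) + q (n + 1) * a (n + 1) - q 1 * a 1 := by
  induction n with
  | zero => simp
  | succ n ih => rw [sum_Icc_succ_top (by omega), sum_Icc_succ_top (by omega), ih]; ring

section SuffixSum

variable (s : ℕ → ℤ) (m : ℕ)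

def suffixSum (r : ℕ) : ℤ := ∑ k ∈ Icc r m, s k

lemma suffixSum_succ_self : suffixSum s m (m + 1) = 0 := by simp [suffixSum]

lemma suffixSum_eq_add {r : ℕ} (hr : r ≤ m) :
    suffixSum s m r = s r + suffixSum s m (r + 1) := by
  rw [suffixSum, suffixSum, ← insert_Icc_add_one_left_eq_Icc hr, sum_insert (by simp)]

lemma suffixSum_eq_mod_two_of_eq_neg_one_pow {r : ℕ} (hr : r ≤ m + 1)
    (hs : ∀ k ∈ Icc r m, s k = (-1) ^ (m - k)) :
    suffixSum s m r = ((m + 1 - r) % 2 : ℕ) := by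
  induction hr using Nat.decreasingInduction with
  | self => simp [suffixSum_succ_self]
  | of_succ k hk ih =>
    have hsk := hs k (mem_Icc.2 ⟨le_rfl, by omega⟩)
    rw [suffixSum_eq_add s m (by omega), ih fun j hj => hs j (Icc_subset_Icc_left k.le_succ hj),
      hsk, neg_one_pow_eq_one_sub_two_mul_mod_two]
    omega

lemma eq_neg_one_pow_of_suffixSum_mem {r : ℕ} (hr : r ≤ m + 1)
    (hs : ∀ k ∈ Icc r m, s k = 1 ∨ s k = -1)
    (hSr : suffixSum s m r = 0 ∨ suffixSum s m r = 1)
    (hS : ∀ k ∈ Icc r m, suffixSum s m (k + 1) = 0 ∨ suffixSum s m (k + 1) = 1) :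
    ∀ k ∈ Icc r m, s k = (-1) ^ (m - k) := by
  induction hr using Nat.decreasingInduction with
  | self => simp
  | of_succ r hr ih =>
    have hr' : r ∈ Icc r m := mem_Icc.2 ⟨le_rfl, by omega⟩
    have htail := ih (fun k hk => hs k (Icc_subset_Icc_left r.le_succ hk)) (hS r hr')
      (fun k hk => hS k (Icc_subset_Icc_left r.le_succ hk))
    have hSsucc := suffixSum_eq_mod_two_of_eq_neg_one_pow s m (by omega) htail
    have hsr : s r = (-1) ^ (m - r) := by
      rw [suffixSum_eq_add s m (by omega), hSsucc] at hSr
      rw [neg_one_pow_eq_one_sub_two_mul_mod_two]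
      rcases hs r hr' with h | h <;> omega
    intro k hk
    rcases (by simp only [mem_Icc] at hk ⊢; omega : k = r ∨ k ∈ Icc (r + 1) m) with rfl | hk'
    · exact hsr
    · exact htail k hk'

lemma forall_suffixSum_mem_iff {r : ℕ} (hr : r ≤ m + 1)
    (hs : ∀ k ∈ Icc r m, s k = 1 ∨ s k = -1)
    (hSr : suffixSum s m r = 0 ∨ suffixSum s m r = 1) :
    (∀ k ∈ Icc r m, suffixSum s m (k + 1) = 0 ∨ suffixSum s m (k + 1) = 1) ↔
      ∀ k ∈ Icc r m, s k = (-1) ^ (m - k) := by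
  refine ⟨eq_neg_one_pow_of_suffixSum_mem s m hr hs hSr, fun halt k hk => ?_⟩
  rw [suffixSum_eq_mod_two_of_eq_neg_one_pow s m (by simp only [mem_Icc] at hk; omega)
    fun j hj => halt j (by simp only [mem_Icc] at hj hk ⊢; omega)]
  omega

end SuffixSum

lemma IsDomino.finsum_neg_one_pow {d : Set (ℕ × ℕ)} (hd : IsDomino d) :
    ∑ᶠ p ∈ d, (-1 : ℤ) ^ (p.1 + p.2) = 0 := by
  obtain ⟨i, j, rfl | rfl⟩ := hd <;> rw [finsum_mem_pair (by simp)]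
  · rw [← add_assoc, pow_succ]; ring
  · rw [add_right_comm, pow_succ]; ring

lemma finsum_neg_one_pow_eq_zero_of_dominoes {D : Set (Set (ℕ × ℕ))}
    (hD : ∀ d ∈ D, IsDomino d) (hdisj : D.PairwiseDisjoint id) (hfin : (⋃₀ D).Finite) :
    ∑ᶠ p ∈ ⋃₀ D, (-1 : ℤ) ^ (p.1 + p.2) = 0 := by
  have hsub : ∀ d ∈ D, d ⊆ ⋃₀ D := fun d hd => Set.subset_sUnion_of_mem hd
  rw [finsum_mem_sUnion hdisj (hfin.finite_subsets.subset hsub) fun d hd => hfin.subset (hsub d hd)]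
  exact finsum_mem_eq_zero_of_forall_eq_zero fun d hd => (hD d hd).finsum_neg_one_pow

namespace IdxPartition

variable (μ : IdxPartition)

lemma le_conjFn_iff {i j : ℕ} (hi : 1 ≤ i) (hj : 1 ≤ j) :
    i ≤ conjFn μ.part j ↔ j ≤ μ.part i := by
  obtain ⟨N, hN⟩ := μ.finite
  have hfin : {k | 1 ≤ k ∧ j ≤ μ.part k}.Finite := (Set.finite_Iio N).subset fun k hk => by
    by_contra hkN
    have := hN k (not_lt.1 hkN)
    simp only [Set.mem_ofPred_eq] at hk
    omega
  constructor
  · intro h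
    by_contra hlt
    have hsub : {k | 1 ≤ k ∧ j ≤ μ.part k} ⊆ Set.Ico 1 i := fun k ⟨hk1, hk⟩ =>
      ⟨hk1, by by_contra hik; have := μ.antitone hi (not_lt.1 hik); omega⟩
    have := Set.ncard_le_ncard hsub (Set.finite_Ico 1 i)
    rw [Set.ncard_Ico_nat] at this
    rw [conjFn] at h
    omega
  · intro h
    have hsub : Set.Icc 1 i ⊆ {k | 1 ≤ k ∧ j ≤ μ.part k} := fun k ⟨hk1, hki⟩ =>
      ⟨hk1, h.trans (μ.antitone hk1 hki)⟩
    have := Set.ncard_le_ncard hsub hfin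
    rw [Set.ncard_Icc_nat] at this
    rw [conjFn]
    omega

noncomputable def length : ℕ := conjFn μ.part 1

lemma one_le_part_iff {i : ℕ} (hi : 1 ≤ i) : 1 ≤ μ.part i ↔ i ≤ μ.length :=
  (μ.le_conjFn_iff hi le_rfl).symm

lemma part_eq_zero_of_notMem {i : ℕ} (hi : i ∉ Icc 1 μ.length) : μ.part i = 0 := by
  rcases Nat.eq_zero_or_pos i with rfl | hi1
  · exact μ.part_zero
  · have := (μ.one_le_part_iff hi1).not.2 (by simp only [mem_Icc] at hi; omega)
    omega

lemma conjFn_le_length {j : ℕ} (hj : 1 ≤ j) : conjFn μ.part j ≤ μ.length := by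
  by_contra h
  have := (μ.le_conjFn_iff (by omega) hj).1 (by omega : μ.length + 1 ≤ conjFn μ.part j)
  rw [μ.part_eq_zero_of_notMem (by simp)] at this
  omega

lemma conjFn_le_conjFn {j j' : ℕ} (hj : 1 ≤ j) (hjj' : j ≤ j') :
    conjFn μ.part j' ≤ conjFn μ.part j := by
  rcases Nat.eq_zero_or_pos (conjFn μ.part j') with h | h
  · omega
  · exact (μ.le_conjFn_iff h hj).2 (hjj'.trans ((μ.le_conjFn_iff h (hj.trans hjj')).1 le_rfl))

lemma mem_cellsFn_iff {p : ℕ × ℕ} :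
    p ∈ cellsFn μ.part ↔ p.1 ∈ Icc 1 μ.length ∧ p.2 ∈ Icc 1 (μ.part p.1) := by
  simp only [cellsFn, Set.mem_ofPred_eq, mem_Icc]
  constructor
  · rintro ⟨h1, h2, h3⟩
    exact ⟨⟨h1, (μ.one_le_part_iff h1).1 (by omega)⟩, h2, h3⟩
  · rintro ⟨⟨h1, -⟩, h2, h3⟩
    exact ⟨h1, h2, h3⟩

lemma cellsFn_finite : (cellsFn μ.part).Finite :=
  ((Set.finite_Icc 1 μ.length).prod (Set.finite_Icc 1 (μ.part 1))).subset fun p hp => by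
    rw [mem_cellsFn_iff, mem_Icc, mem_Icc] at hp
    exact ⟨hp.1, hp.2.1, hp.2.2.trans (μ.antitone le_rfl hp.1.1)⟩

lemma finsum_cellsFn_neg_one_pow :
    ∑ᶠ p ∈ cellsFn μ.part, (-1 : ℤ) ^ (p.1 + p.2) =
      ∑ i ∈ Icc 1 μ.length, ∑ j ∈ Icc 1 (μ.part i), (-1 : ℤ) ^ (i + j) := by
  rw [finsum_mem_eq_finite_toFinset_sum _ μ.cellsFn_finite]
  exact sum_finset_product _ _ _ fun p => by rw [Set.Finite.mem_toFinset, mem_cellsFn_iff]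

lemma bFn_eq_sum :
    bFn μ.part = ∑ i ∈ Icc 1 μ.length,
      (∑ j ∈ Icc 1 (μ.part i), (-1 : ℤ) ^ (μ.part i + conjFn μ.part j + i + j + 1)) *
        ((μ.part i : ℤ) - i) := by
  rw [bFn, finsum_eq_sum_of_support_subset _ fun i hi => ?_]
  · exact sum_congr rfl fun i _ => (sum_mul ..).symm
  · by_contra h
    simp [μ.part_eq_zero_of_notMem (by simpa using h)] at hi

noncomputable def beta (k : ℕ) : ℕ := μ.part k + (μ.length - k)

noncomputable def sign (k : ℕ) : ℤ := (-1) ^ μ.beta k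

lemma sign_eq_one_or_neg_one (k : ℕ) : μ.sign k = 1 ∨ μ.sign k = -1 :=
  neg_one_pow_eq_or ℤ _

lemma beta_strictAntiOn : StrictAntiOn μ.beta (Set.Icc 1 μ.length) := by
  intro k hk k' hk' hkk'
  have := μ.antitone hk.1 hkk'.le
  simp only [beta, Set.mem_Icc] at hk hk' ⊢
  omega

section Hooks

variable {μ} {i : ℕ}

lemma neg_one_pow_hookFn {j : ℕ} (hi : 1 ≤ i) (hj : j ∈ Icc 1 (μ.part i)) :
    (-1 : ℤ) ^ hookFn μ.part i j = (-1) ^ (μ.part i + conjFn μ.part j + i + j + 1) := by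
  have := (μ.le_conjFn_iff hi (mem_Icc.1 hj).1).2 (mem_Icc.1 hj).2
  rw [neg_one_pow_eq_one_sub_two_mul_mod_two, neg_one_pow_eq_one_sub_two_mul_mod_two, hookFn]
  simp only [mem_Icc] at hj
  omega

lemma hookFn_strictAntiOn : StrictAntiOn (hookFn μ.part i) (Set.Icc 1 (μ.part i)) := by
  intro j hj j' hj' hjj'
  have := μ.conjFn_le_conjFn hj.1 hjj'.le
  simp only [hookFn, Set.mem_Icc] at hj hj' ⊢
  omega

lemma hookFn_mem_Icc {j : ℕ} (hi : i ∈ Icc 1 μ.length) (hj : j ∈ Icc 1 (μ.part i)) :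
    hookFn μ.part i j ∈ Icc 1 (μ.beta i) := by
  have := μ.conjFn_le_length (mem_Icc.1 hj).1
  simp only [hookFn, beta, mem_Icc] at hi hj ⊢
  omega

lemma beta_sub_mem_Icc {k : ℕ} (hi : i ∈ Icc 1 μ.length) (hk : k ∈ Icc (i + 1) μ.length) :
    μ.beta i - μ.beta k ∈ Icc 1 (μ.beta i) := by
  simp only [mem_Icc] at hi hk ⊢
  have := μ.beta_strictAntiOn ⟨hi.1, hi.2⟩ ⟨by omega, hk.2⟩ (by omega : i < k)
  omega

lemma hookFn_ne_beta_sub {j k : ℕ} (hi : i ∈ Icc 1 μ.length) (hj : j ∈ Icc 1 (μ.part i))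
    (hk : k ∈ Icc (i + 1) μ.length) :
    hookFn μ.part i j ≠ μ.beta i - μ.beta k := by
  simp only [mem_Icc] at hi hj hk
  have hfk := μ.antitone hi.1 (by omega : i ≤ k)
  have hic := (μ.le_conjFn_iff hi.1 hj.1).2 hj.2
  have hkc := μ.le_conjFn_iff (by omega : 1 ≤ k) hj.1
  have := μ.conjFn_le_length hj.1
  simp only [hookFn, beta]
  by_cases hjk : j ≤ μ.part k <;> [have := hkc.2 hjk; have := mt hkc.1 hjk] <;> omega

lemma sum_neg_one_pow_hookFn (hi : i ∈ Icc 1 μ.length) :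
    ∑ j ∈ Icc 1 (μ.part i), (-1 : ℤ) ^ hookFn μ.part i j =
      ∑ t ∈ Icc 1 (μ.beta i), (-1 : ℤ) ^ t -
        μ.sign i * suffixSum μ.sign μ.length (i + 1) := by
  have hhook : Set.InjOn (hookFn μ.part i) (Icc 1 (μ.part i)) := by
    rw [coe_Icc]; exact hookFn_strictAntiOn.injOn
  have hlt : ∀ k ∈ Icc (i + 1) μ.length, μ.beta k < μ.beta i := fun k hk => by
    have := beta_sub_mem_Icc hi hk; simp only [mem_Icc] at this; omega
  have hleg : Set.InjOn (μ.beta i - μ.beta ·) (Icc (i + 1) μ.length) := by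
    intro k hk k' hk' h
    rw [mem_coe] at hk hk'
    have := hlt k hk
    have := hlt k' hk'
    simp only [mem_Icc] at hi hk hk'
    exact μ.beta_strictAntiOn.injOn ⟨by omega, hk.2⟩ ⟨by omega, hk'.2⟩
      (by dsimp only at h; omega)
  have hdisj : Disjoint ((Icc 1 (μ.part i)).image (hookFn μ.part i))
      ((Icc (i + 1) μ.length).image (μ.beta i - μ.beta ·)) := by
    simp only [disjoint_left, mem_image, not_exists, not_and]
    rintro _ ⟨j, hj, rfl⟩ k hk
    exact (hookFn_ne_beta_sub hi hj hk).symm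
  have hunion : (Icc 1 (μ.part i)).image (hookFn μ.part i) ∪
      (Icc (i + 1) μ.length).image (μ.beta i - μ.beta ·) = Icc 1 (μ.beta i) := by
    refine eq_of_subset_of_card_le (union_subset ?_ ?_) ?_
    · exact image_subset_iff.2 fun j hj => hookFn_mem_Icc hi hj
    · exact image_subset_iff.2 fun k hk => beta_sub_mem_Icc hi hk
    · rw [card_union_of_disjoint hdisj, card_image_of_injOn hhook, card_image_of_injOn hleg]
      simp only [Nat.card_Icc, beta]
      omega
  rw [← hunion, sum_union hdisj, sum_image hhook, sum_image hleg, suffixSum, mul_sum,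
    sum_congr rfl fun k hk => neg_one_pow_sub_eq_mul (hlt k hk).le]
  exact (add_sub_cancel_right _ _).symm

end Hooks

lemma two_mul_sum_row {i : ℕ} (hi : i ∈ Icc 1 μ.length) :
    2 * ∑ j ∈ Icc 1 (μ.part i), (-1 : ℤ) ^ (μ.part i + conjFn μ.part j + i + j + 1) =
      suffixSum μ.sign μ.length (i + 1) * (suffixSum μ.sign μ.length (i + 1) - 1) -
        suffixSum μ.sign μ.length i * (suffixSum μ.sign μ.length i - 1) := by
  have hs : μ.sign i ^ 2 = 1 := by rcases μ.sign_eq_one_or_neg_one i with h | h <;> simp [h]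
  rw [← sum_congr rfl fun j hj => neg_one_pow_hookFn (mem_Icc.1 hi).1 hj,
    sum_neg_one_pow_hookFn hi, mul_sub, two_mul_sum_Icc_neg_one_pow, ← sign,
    suffixSum_eq_add _ _ (mem_Icc.1 hi).2]
  linear_combination hs

lemma two_mul_bFn :
    2 * bFn μ.part =
      ∑ i ∈ Icc 1 μ.length, suffixSum μ.sign μ.length (i + 1) *
          (suffixSum μ.sign μ.length (i + 1) - 1) * ((μ.part i : ℤ) - μ.part (i + 1) + 1) -
        suffixSum μ.sign μ.length 1 * (suffixSum μ.sign μ.length 1 - 1) *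
          ((μ.part 1 : ℤ) - 1) := by
  rw [bFn_eq_sum, mul_sum, sum_congr rfl fun i hi => by rw [← mul_assoc, μ.two_mul_sum_row hi],
    sum_Icc_sub_mul_eq fun r => suffixSum μ.sign μ.length r * (suffixSum μ.sign μ.length r - 1),
    suffixSum_succ_self]
  push_cast
  simp only [zero_mul, add_zero]
  congr 1
  exact sum_congr rfl fun i _ => by ring

lemma two_mul_suffixSum_one :
    2 * suffixSum μ.sign μ.length 1 =
      1 - (-1) ^ μ.length +
        4 * (-1) ^ μ.length * ∑ᶠ p ∈ cellsFn μ.part, (-1 : ℤ) ^ (p.1 + p.2) := by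
  set e : ℤ := (-1) ^ μ.length
  have he : e ^ 2 = 1 := by rcases neg_one_pow_eq_or ℤ μ.length with h | h <;> simp [e, h]
  have hS : suffixSum μ.sign μ.length 1 =
      e * ∑ k ∈ Icc 1 μ.length, (-1 : ℤ) ^ μ.part k * (-1) ^ k := by
    rw [suffixSum, mul_sum]
    refine sum_congr rfl fun k hk => ?_
    rw [sign, beta, pow_add, neg_one_pow_sub_eq_mul (mem_Icc.1 hk).2]
    ring
  have hC : 2 * ∑ᶠ p ∈ cellsFn μ.part, (-1 : ℤ) ^ (p.1 + p.2) =
      ∑ k ∈ Icc 1 μ.length, (-1 : ℤ) ^ μ.part k * (-1) ^ k -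
        ∑ k ∈ Icc 1 μ.length, (-1 : ℤ) ^ k := by
    rw [finsum_cellsFn_neg_one_pow, mul_sum, ← sum_sub_distrib]
    refine sum_congr rfl fun i _ => ?_
    simp_rw [pow_add]
    rw [← mul_sum, mul_left_comm, two_mul_sum_Icc_neg_one_pow]
    ring
  rw [hS]
  linear_combination (-2 * e) * hC + e * two_mul_sum_Icc_neg_one_pow μ.length + he

lemma suffixSum_one_eq_zero_or_one (h : HasDominoTiling μ.part) :
    suffixSum μ.sign μ.length 1 = 0 ∨ suffixSum μ.sign μ.length 1 = 1 := by
  obtain ⟨D, hD, hdisj, hcov⟩ := h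
  have hchecker := finsum_neg_one_pow_eq_zero_of_dominoes hD hdisj (hcov ▸ μ.cellsFn_finite)
  have := μ.two_mul_suffixSum_one
  rw [← hcov, hchecker, neg_one_pow_eq_one_sub_two_mul_mod_two] at this
  omega

lemma forall_even_part_iff
    (hS : suffixSum μ.sign μ.length 1 = 0 ∨ suffixSum μ.sign μ.length 1 = 1) :
    (∀ i, Even (μ.part i)) ↔ ∀ i ∈ Icc 1 μ.length,
      suffixSum μ.sign μ.length (i + 1) = 0 ∨ suffixSum μ.sign μ.length (i + 1) = 1 := by
  rw [forall_suffixSum_mem_iff μ.sign μ.length (by omega)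
    (fun k _ => μ.sign_eq_one_or_neg_one k) hS]
  constructor
  · intro h k _
    rw [sign, beta, pow_add, (h k).neg_one_pow, one_mul]
  · intro h i
    by_cases hi : i ∈ Icc 1 μ.length
    · have := h i hi
      rw [sign, beta, neg_one_pow_eq_one_sub_two_mul_mod_two,
        neg_one_pow_eq_one_sub_two_mul_mod_two] at this
      exact Nat.even_iff.2 (by omega)
    · rw [μ.part_eq_zero_of_notMem hi]
      exact Even.zero

end IdxPartition

/-- if `λ` has empty 2-core then `b(λ) ≥ 0`, with `b(λ) = 0` iff
every part of `λ` is even. -/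
theorem b_nonneg_and_eq_zero_iff_even (μ : IdxPartition) (h : HasDominoTiling μ.part) :
    0 ≤ bFn μ.part ∧ (bFn μ.part = 0 ↔ ∀ i : ℕ, Even (μ.part i)) := by
  set S := suffixSum μ.sign μ.length
  have hS₁ : S 1 = 0 ∨ S 1 = 1 := μ.suffixSum_one_eq_zero_or_one h
  have h2b : 2 * bFn μ.part = ∑ i ∈ Icc 1 μ.length,
      S (i + 1) * (S (i + 1) - 1) * ((μ.part i : ℤ) - μ.part (i + 1) + 1) := by
    rw [μ.two_mul_bFn]
    rcases hS₁ with h₁ | h₁ <;> simp [S, h₁]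
  have hw : ∀ i ∈ Icc 1 μ.length, 0 < (μ.part i : ℤ) - μ.part (i + 1) + 1 := fun i hi => by
    have := μ.antitone (mem_Icc.1 hi).1 (by omega : i ≤ i + 1)
    omega
  have hterm : ∀ i ∈ Icc 1 μ.length,
      0 ≤ S (i + 1) * (S (i + 1) - 1) * ((μ.part i : ℤ) - μ.part (i + 1) + 1) := fun i hi =>
    mul_nonneg (by nlinarith [Int.le_self_sq (S (i + 1))]) (hw i hi).le
  refine ⟨by linarith [sum_nonneg hterm], ?_⟩
  rw [μ.forall_even_part_iff hS₁, ← mul_right_inj' (two_ne_zero (α := ℤ)), h2b, mul_zero,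
    sum_eq_zero_iff_of_nonneg hterm]
  refine forall₂_congr fun i hi => ?_
  simp [S, (hw i hi).ne', sub_eq_zero]
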